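/- The function β(r) := (1/5)·( 27·ln 3 − 32·ln 2 + 5·φ₀(r) − 32·φ₀(r/2) + 27·φ₀(r/3) ), r ≥ 0, is a non-singular Beppo Levi L₀-spline on the knot set ρ = {1,2,3} satisfying β(r) = 0 for all r ≥ 3; moreover, every non-singular Beppo Levi L₀-spline on ρ = {1,2,3} that vanishes identically on [3,∞) is a constant multiple of β. -/

import Mathlib

open MeasureTheory Set Filter

noncomputable section

/-- The radial Beppo Levi energy space `Λ₀`: functions `f : (0,∞) → ℂ` of class `C¹`
whose derivative `f′` is locally absolutely continuous on compact subintervals of `(0,∞)`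
(encoded by the fundamental theorem of calculus with an integrable density `f″`),
and whose radial Beppo Levi energy `∫₀^∞ ( r·|f″(r)|² + (1/r)·|f′(r)|² ) dr` is finite. -/
structure Lambda0 where
  f : ℝ → ℂ
  f' : ℝ → ℂ
  f'' : ℝ → ℂ
  hasDeriv : ∀ r ∈ Set.Ioi (0:ℝ), HasDerivAt f (f' r) r
  contDeriv : ContinuousOn f' (Set.Ioi 0)
  locAC : ∀ a b : ℝ, 0 < a → a ≤ b →
    MeasureTheory.IntegrableOn f'' (Set.Icc a b) ∧
      ∀ x ∈ Set.Icc a b, f' x = f' a + ∫ t in a..x, f'' t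
  energyFin : MeasureTheory.IntegrableOn
    (fun r : ℝ => r * ‖f'' r‖ ^ 2 + (1 / r) * ‖f' r‖ ^ 2) (Set.Ioi 0)

/-- The squared radial Beppo Levi energy `‖·‖₀²` of a function with first derivative `g'`
and second derivative `g''`. -/
def energySq (g' g'' : ℝ → ℂ) : ℝ :=
  ∫ r in Set.Ioi (0:ℝ), (r * ‖g'' r‖ ^ 2 + (1 / r) * ‖g' r‖ ^ 2)

/-- The seminorm `‖f‖₀`. -/
def Lambda0.seminorm0 (F : Lambda0) : ℝ :=
  Real.sqrt (energySq F.f' F.f'')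

/-- The semi-inner product `⟨f,g⟩₀`. -/
def innerBL (F G : Lambda0) : ℂ :=
  ∫ r in Set.Ioi (0:ℝ),
    ((r : ℂ) * F.f'' r * (starRingEnd ℂ) (G.f'' r) +
      (1 / (r : ℂ)) * F.f' r * (starRingEnd ℂ) (G.f' r))

/-- A Beppo Levi `L₀`-spline on the positive knots `r 1 < r 2 < … < r n`:
piecewise of the form `a·x² + b·x²·ln x + c + d·ln x` between consecutive knots,
of the form `a·x² + b·x²·ln x + c` on `(0, r 1)`, of the form `c + d·ln x` on `(r n, ∞)`,
`C²` throughout `(0,∞)`, and continuously extended at `0`. -/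
structure IsBLSpline (n : ℕ) (r : ℕ → ℝ) (η : ℝ → ℂ) : Prop where
  pieces : ∀ j : ℕ, 1 ≤ j → j + 1 ≤ n → ∃ a b c d : ℂ,
    ∀ x ∈ Set.Ioo (r j) (r (j + 1)),
      η x = a * (x : ℂ) ^ 2 + b * (x : ℂ) ^ 2 * (Real.log x : ℂ) + c + d * (Real.log x : ℂ)
  left : ∃ a b c : ℂ, ∀ x ∈ Set.Ioo (0 : ℝ) (r 1),
      η x = a * (x : ℂ) ^ 2 + b * (x : ℂ) ^ 2 * (Real.log x : ℂ) + c
  right : ∃ c d : ℂ, ∀ x ∈ Set.Ioi (r n), η x = c + d * (Real.log x : ℂ)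
  smooth : ContDiffOn ℝ 2 η (Set.Ioi 0)
  cont0 : ContinuousWithinAt η (Set.Ici 0) 0

/-- A Beppo Levi `L₀`-spline is non-singular if on `(0, r₁)` it has the form `a·x² + c`. -/
def NonSingularBLS (r1 : ℝ) (η : ℝ → ℂ) : Prop :=
  ∃ a c : ℂ, ∀ x ∈ Set.Ioo (0 : ℝ) r1, η x = a * (x : ℂ) ^ 2 + c

/-- Rabut's kernel `K`. -/
def Kfun (r t : ℝ) : ℝ :=
  if r ≤ t then 0 else (1 / 4) * (t ^ 2 - r ^ 2 + (r ^ 2 + t ^ 2) * Real.log (r / t))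

/-- The limiting kernel `H_{0,∞}` (with left endpoint knot `r1`). -/
def Hfun (r1 r t : ℝ) : ℝ :=
  Kfun r t - Kfun r r1 - Kfun r1 t + (1 / 4) * (r ^ 2 - r1 ^ 2) * Real.log (t / r1)

/-- The basis function `φ₀`. -/
def phi0 (r : ℝ) : ℝ :=
  if r ≤ 1 then r ^ 2 - r ^ 2 * Real.log r else 1 + Real.log r

/-- Johnson's compactly supported profile `η₂`. -/
def eta2 (x : ℝ) : ℂ :=
  (((4 / 3 : ℝ) * (Real.log 2 - phi0 x + phi0 (x / 2)) : ℝ) : ℂ)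

/-- The non-singular compactly supported profile `β`. -/
def betaFn (x : ℝ) : ℂ :=
  (((1 / 5 : ℝ) * (27 * Real.log 3 - 32 * Real.log 2 + 5 * phi0 x
      - 32 * phi0 (x / 2) + 27 * phi0 (x / 3)) : ℝ) : ℂ)

/-- `Ker L₀ = span{r², r² ln r, 1, ln r}`, as functions on `(0,∞)`. -/
def KerL0 : Set (ℝ → ℂ) :=
  {η | ∃ a b c d : ℂ, ∀ x : ℝ, 0 < x →
    η x = a * (x : ℂ) ^ 2 + b * (x : ℂ) ^ 2 * (Real.log x : ℂ) + c + d * (Real.log x : ℂ)}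

/-- `α(h) = inf_{η ∈ Ker L₀} sup_{t ∈ [0,1]} |t^μ − η(1+th)|`. -/
def alphaFn (μ h : ℝ) : ℝ :=
  sInf {v : ℝ | ∃ η ∈ KerL0,
    v = sSup ((fun t : ℝ => ‖((t ^ μ : ℝ) : ℂ) - η (1 + t * h)‖) '' Set.Icc (0 : ℝ) 1)}

/-!
On every interval between knots a spline lies in `Ker L₀ = span{x², x² ln x, 1, ln x}`, and being
`C²` at a knot means that the 2-jets (value, first and second derivative) of the two adjacent
pieces agree there. For `β` this comes from `φ₀` being `C²`: its two branches `r² - r² ln r` and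
`1 + ln r` share the jet `(1, 1, -1)` at `r = 1`. Conversely, a non-singular spline vanishing on
`[3,∞)` has `2 + 4 + 4` coefficients on `(0,1)`, `(1,2)`, `(2,3)`, subject to the nine jet
conditions at `1, 2, 3`; this linear system has a one-dimensional solution space, spanned by the
coefficients of `β` and parametrised by the coefficient of `x² ln x` on `(1,2)`. Continuity then
extends `γ = c β` from the open intervals to all of `[0,∞)`.
-/

open Real

theorem HasDerivAt.if_le {F : Type*} [NormedAddCommGroup F] [NormedSpace ℝ F] {g h : ℝ → F}
    {g' h' : F} {c x : ℝ} (hg : HasDerivAt g g' x) (hh : HasDerivAt h h' x)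
    (hc : x = c → g x = h x ∧ g' = h') :
    HasDerivAt (fun y => if y ≤ c then g y else h y) (if x ≤ c then g' else h') x := by
  rcases lt_trichotomy x c with hxc | rfl | hxc
  · rw [if_pos hxc.le]
    refine hg.congr_of_eventuallyEq ?_
    filter_upwards [Iio_mem_nhds hxc] with y hy using if_pos (le_of_lt hy)
  · obtain ⟨hgh, hgh'⟩ := hc rfl
    have hIic : HasDerivWithinAt (fun y => if y ≤ x then g y else h y) g' (Iic x) x :=
      hg.hasDerivWithinAt.congr (fun y hy => if_pos hy) (if_pos le_rfl)
    have hIci : HasDerivWithinAt (fun y => if y ≤ x then g y else h y) g' (Ici x) x := by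
      refine hgh' ▸ hh.hasDerivWithinAt.congr (fun y hy => ?_) (by simp [hgh])
      rcases (mem_Ici.1 hy).eq_or_lt with rfl | hxy
      · simp [hgh]
      · exact if_neg (not_le.2 hxy)
    rw [if_pos le_rfl, ← hasDerivWithinAt_univ, ← Iic_union_Ici]
    exact hIic.union hIci
  · rw [if_neg (not_le.2 hxc)]
    refine hh.congr_of_eventuallyEq ?_
    filter_upwards [Ioi_mem_nhds hxc] with y hy using if_neg (not_le.2 hy)

theorem contDiffOn_two_of_hasDerivAt {𝕜 F : Type*} [NontriviallyNormedField 𝕜]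
    [NormedAddCommGroup F] [NormedSpace 𝕜 F] {f f' f'' : 𝕜 → F} {U : Set 𝕜} (hU : IsOpen U)
    (hf : ∀ x ∈ U, HasDerivAt f (f' x) x) (hf' : ∀ x ∈ U, HasDerivAt f' (f'' x) x)
    (hf'' : ContinuousOn f'' U) : ContDiffOn 𝕜 2 f U := by
  have h1 : ContDiffOn 𝕜 1 f' U := by
    rw [show (1 : WithTop ℕ∞) = 0 + 1 from rfl, contDiffOn_succ_iff_deriv_of_isOpen hU]
    refine ⟨fun x hx => (hf' x hx).differentiableAt.differentiableWithinAt, by simp, ?_⟩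
    exact (contDiffOn_zero.2 hf'').congr fun x hx => (hf' x hx).deriv
  rw [show (2 : WithTop ℕ∞) = 1 + 1 from rfl, contDiffOn_succ_iff_deriv_of_isOpen hU]
  exact ⟨fun x hx => (hf x hx).differentiableAt.differentiableWithinAt, by simp,
    h1.congr fun x hx => (hf x hx).deriv⟩

lemma eqOn_Ici_zero_of_eqOn_off_knots {F : Type*} [TopologicalSpace F] [T2Space F]
    {f g : ℝ → F} (hf : ContinuousOn f (Ici 0)) (hg : ContinuousOn g (Ici 0))
    (h : EqOn f g (Ioo 0 1 ∪ Ioo 1 2 ∪ Ioo 2 3 ∪ Ioi 3)) : EqOn f g (Ici 0) := by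
  refine h.of_subset_closure hf hg ?_ ?_
  · rintro x (((hx | hx) | hx) | hx) <;> simp only [mem_Ici, mem_Ioo, mem_Ioi] at hx ⊢ <;>
      linarith
  · simp only [closure_union, closure_Ioo zero_ne_one, closure_Ioo (by norm_num : (1 : ℝ) ≠ 2),
      closure_Ioo (by norm_num : (2 : ℝ) ≠ 3), closure_Ioi]
    intro x (hx : 0 ≤ x)
    simp only [mem_union, mem_Icc, mem_Ici]
    by_contra! hne
    obtain ⟨⟨⟨h1, h2⟩, h3⟩, h4⟩ := hne
    linarith [h3 (h2 (h1 hx).le).le]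

lemma hasDerivAt_sq_mul_log {x : ℝ} (hx : x ≠ 0) :
    HasDerivAt (fun y => y ^ 2 * log y) (2 * x * log x + x) x :=
  ((hasDerivAt_pow 2 x).mul (hasDerivAt_log hx)).congr_deriv (by field_simp; ring)

lemma hasDerivAt_two_mul_mul_log_add_self {x : ℝ} (hx : x ≠ 0) :
    HasDerivAt (fun y => 2 * y * log y + y) (2 * log x + 3) x := by
  have H := ((hasDerivAt_mul_log hx).const_mul 2).add (hasDerivAt_id' x)
  simp only [← mul_assoc] at H
  exact H.congr_deriv (by ring)

def kerL0Fn (a b c d : ℂ) (x : ℝ) : ℂ :=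
  a * (x : ℂ) ^ 2 + b * (x : ℂ) ^ 2 * (log x : ℂ) + c + d * (log x : ℂ)

def kerL0Fn' (a b d : ℂ) (x : ℝ) : ℂ :=
  2 * a * x + b * (2 * x * log x + x) + d * (x : ℂ)⁻¹

def kerL0Fn'' (a b d : ℂ) (x : ℝ) : ℂ :=
  2 * a + b * (2 * log x + 3) - d * ((x : ℂ) ^ 2)⁻¹

lemma kerL0Fn_zero_zero (a c : ℂ) (x : ℝ) : kerL0Fn a 0 c 0 x = a * (x : ℂ) ^ 2 + c := by
  simp [kerL0Fn]

lemma hasDerivAt_kerL0Fn (a b c d : ℂ) {x : ℝ} (hx : 0 < x) :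
    HasDerivAt (kerL0Fn a b c d) (kerL0Fn' a b d x) x := by
  have H := ((((hasDerivAt_pow 2 x).ofReal_comp.const_mul a).add
    ((hasDerivAt_sq_mul_log hx.ne').ofReal_comp.const_mul b)).add_const c).add
    ((hasDerivAt_log hx.ne').ofReal_comp.const_mul d)
  push_cast at H
  refine (H.congr_deriv ?_).congr_of_eventuallyEq (.of_forall fun y => ?_)
  · simp only [kerL0Fn']; ring
  · simp only [kerL0Fn, Pi.add_apply]; ring

lemma hasDerivAt_kerL0Fn' (a b d : ℂ) {x : ℝ} (hx : 0 < x) :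
    HasDerivAt (kerL0Fn' a b d) (kerL0Fn'' a b d x) x := by
  have H := (((hasDerivAt_id' x).ofReal_comp.const_mul (2 * a)).add
    ((hasDerivAt_two_mul_mul_log_add_self hx.ne').ofReal_comp.const_mul b)).add
    ((hasDerivAt_inv hx.ne').ofReal_comp.const_mul d)
  push_cast at H
  refine (H.congr_deriv ?_).congr_of_eventuallyEq (.of_forall fun y => ?_)
  · simp only [kerL0Fn'']; ring
  · simp only [kerL0Fn', Pi.add_apply]

lemma continuousOn_kerL0Fn'' (a b d : ℂ) : ContinuousOn (kerL0Fn'' a b d) (Ioi 0) :=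
  continuousOn_of_forall_continuousAt fun x hx => by
    have := (mem_Ioi.1 hx).ne'
    unfold kerL0Fn''
    fun_prop (disch := simp [*])

def kerL0Jet (a b c d : ℂ) (k : ℝ) : ℂ × ℂ × ℂ :=
  (kerL0Fn a b c d k, kerL0Fn' a b d k, kerL0Fn'' a b d k)

lemma kerL0Jet_eq_of_eqOn {γ : ℝ → ℂ} (hγ : ContDiffOn ℝ 2 γ (Ioi 0)) {a b c d : ℂ}
    {s : Set ℝ} (hs : IsOpen s) (hs0 : s ⊆ Ioi 0) {k : ℝ} (hk0 : 0 < k) (hk : k ∈ closure s)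
    (h : EqOn γ (kerL0Fn a b c d) s) :
    kerL0Jet a b c d k = (γ k, deriv γ k, deriv (deriv γ) k) := by
  have hks : insert k s ⊆ Ioi 0 := insert_subset hk0 hs0
  have eq_at {f g : ℝ → ℂ} (hf : ContinuousOn f (Ioi 0)) (hg : ContinuousOn g (Ioi 0))
      (hfg : EqOn f g s) : f k = g k :=
    hfg.of_subset_closure (hf.mono hks) (hg.mono hks) (subset_insert k s)
      (insert_subset hk subset_closure) (mem_insert k s)
  have h' : EqOn (deriv γ) (kerL0Fn' a b d) s := fun x hx =>
    (h.deriv hs hx).trans (hasDerivAt_kerL0Fn a b c d (hs0 hx)).deriv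
  have h'' : EqOn (deriv (deriv γ)) (kerL0Fn'' a b d) s := fun x hx =>
    (h'.deriv hs hx).trans (hasDerivAt_kerL0Fn' a b d (hs0 hx)).deriv
  have hγ' := hγ.continuousOn_deriv_of_isOpen isOpen_Ioi one_le_two
  have hγ'' :=
    (hγ.deriv_of_isOpen isOpen_Ioi le_rfl).continuousOn_deriv_of_isOpen isOpen_Ioi le_rfl
  have hker : ContinuousOn (kerL0Fn a b c d) (Ioi 0) := fun x hx =>
    (hasDerivAt_kerL0Fn a b c d hx).continuousAt.continuousWithinAt
  have hker' : ContinuousOn (kerL0Fn' a b d) (Ioi 0) := fun x hx =>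
    (hasDerivAt_kerL0Fn' a b d hx).continuousAt.continuousWithinAt
  rw [kerL0Jet, eq_at hker hγ.continuousOn h.symm, eq_at hker' hγ' h'.symm,
    eq_at (continuousOn_kerL0Fn'' a b d) hγ'' h''.symm]

lemma kerL0Jet_eq_of_eqOn_Ioo {γ : ℝ → ℂ} (hγ : ContDiffOn ℝ 2 γ (Ioi 0))
    {a b c d a' b' c' d' : ℂ} {u k v : ℝ} (hu : 0 ≤ u) (huk : u < k) (hkv : k < v)
    (hl : EqOn γ (kerL0Fn a b c d) (Ioo u k)) (hr : EqOn γ (kerL0Fn a' b' c' d') (Ioo k v)) :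
    kerL0Jet a b c d k = kerL0Jet a' b' c' d' k := by
  have hk : 0 < k := hu.trans_lt huk
  refine (kerL0Jet_eq_of_eqOn hγ isOpen_Ioo (fun x hx => hu.trans_lt hx.1) hk ?_ hl).trans
    (kerL0Jet_eq_of_eqOn hγ isOpen_Ioo (fun x hx => hk.trans hx.1) hk ?_ hr).symm
  · rw [closure_Ioo huk.ne]; exact right_mem_Icc.2 huk.le
  · rw [closure_Ioo hkv.ne]; exact left_mem_Icc.2 hkv.le

def phi0' (r : ℝ) : ℝ :=
  if r ≤ 1 then r - 2 * r * log r else r⁻¹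

def phi0'' (r : ℝ) : ℝ :=
  if r ≤ 1 then -1 - 2 * log r else -(r ^ 2)⁻¹

lemma phi0_of_le_one {r : ℝ} (hr : r ≤ 1) : phi0 r = r ^ 2 - r ^ 2 * log r := if_pos hr

lemma phi0_of_one_le {r : ℝ} (hr : 1 ≤ r) : phi0 r = 1 + log r := by
  rcases hr.eq_or_lt with rfl | hr
  · simp [phi0]
  · exact if_neg (not_le.2 hr)

lemma continuous_phi0 : Continuous phi0 := by
  refine continuous_if_le continuous_id continuous_const ?_ ?_ (fun r hr => by simp [hr])
  · exact ((continuous_pow 2).sub (continuous_id.mul continuous_mul_log)).continuousOn.congr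
      fun r _ => by simp only [Pi.sub_apply, Pi.mul_apply, id]; ring
  · exact continuousOn_const.add (continuousOn_log.mono fun r (hr : 1 ≤ r) => by
      simp only [mem_compl_iff, mem_singleton_iff]; linarith)

lemma hasDerivAt_phi0 {r : ℝ} (hr : 0 < r) : HasDerivAt phi0 (phi0' r) r := by
  have hg : HasDerivAt (fun y => y ^ 2 - y ^ 2 * log y) (r - 2 * r * log r) r :=
    ((hasDerivAt_pow 2 r).sub (hasDerivAt_sq_mul_log hr.ne')).congr_deriv (by ring)
  exact hg.if_le ((hasDerivAt_log hr.ne').const_add 1) (by rintro rfl; norm_num)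

lemma hasDerivAt_phi0' {r : ℝ} (hr : 0 < r) : HasDerivAt phi0' (phi0'' r) r := by
  have hg : HasDerivAt (fun y => y - 2 * y * log y) (-1 - 2 * log r) r := by
    have H := (hasDerivAt_id' r).sub ((hasDerivAt_mul_log hr.ne').const_mul 2)
    simp only [← mul_assoc] at H
    exact H.congr_deriv (by ring)
  have hh : HasDerivAt (fun y => y⁻¹) (-(r ^ 2)⁻¹) r := hasDerivAt_inv hr.ne'
  exact hg.if_le hh (by rintro rfl; norm_num)

lemma continuousOn_phi0'' : ContinuousOn phi0'' (Ioi 0) := by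
  refine ContinuousOn.if (fun r hr => ?_) ?_ ?_
  · obtain rfl : r = 1 := frontier_Iic_subset 1 hr.2
    norm_num
  · exact continuousOn_of_forall_continuousAt fun r hr => by
      have := (mem_Ioi.1 hr.1).ne'; fun_prop (disch := simp [*])
  · exact continuousOn_of_forall_continuousAt fun r hr => by
      have := (mem_Ioi.1 hr.1).ne'; fun_prop (disch := simp [*])

lemma contDiffOn_phi0 : ContDiffOn ℝ 2 phi0 (Ioi 0) :=
  contDiffOn_two_of_hasDerivAt isOpen_Ioi (fun _ hr => hasDerivAt_phi0 hr)
    (fun _ hr => hasDerivAt_phi0' hr) continuousOn_phi0''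

lemma continuous_betaFn : Continuous betaFn := by
  have := continuous_phi0
  unfold betaFn
  fun_prop

lemma contDiffOn_betaFn : ContDiffOn ℝ 2 betaFn (Ioi 0) := by
  have hφ : ∀ c : ℝ, 0 < c → ContDiffOn ℝ 2 (fun x => phi0 (x / c)) (Ioi 0) := fun c hc =>
    contDiffOn_phi0.comp (contDiff_id.div_const c).contDiffOn fun x hx => div_pos hx hc
  refine (Complex.ofRealCLM.contDiff.comp_contDiffOn (contDiffOn_const.mul ?_)).congr
    fun x _ => rfl
  exact (((contDiffOn_const.sub contDiffOn_const).add (contDiffOn_const.mul contDiffOn_phi0)).sub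
    (contDiffOn_const.mul (hφ 2 two_pos))).add (contDiffOn_const.mul (hφ 3 three_pos))

def betaPiece₀ : ℝ → ℂ :=
  kerL0Fn ((3 * log 3 - 8 * log 2) / 5) 0 ((27 * log 3 - 32 * log 2) / 5) 0

def betaPiece₁ : ℝ → ℂ :=
  kerL0Fn ((3 * log 3 - 8 * log 2 - 5) / 5) 1 ((27 * log 3 - 32 * log 2 + 5) / 5) 1

def betaPiece₂ : ℝ → ℂ :=
  kerL0Fn ((3 * log 3 + 3) / 5) (-3 / 5) ((27 * log 3 - 27) / 5) (-27 / 5)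

lemma betaFn_eqOn_Ioo_zero_one : EqOn betaFn betaPiece₀ (Ioo 0 1) := by
  rintro x ⟨hx0, hx1⟩
  simp only [betaFn, betaPiece₀, kerL0Fn, phi0_of_le_one hx1.le,
    phi0_of_le_one (by linarith : x / 2 ≤ 1), phi0_of_le_one (by linarith : x / 3 ≤ 1),
    log_div hx0.ne' two_ne_zero, log_div hx0.ne' three_ne_zero]
  push_cast
  ring

lemma betaFn_eqOn_Ioo_one_two : EqOn betaFn betaPiece₁ (Ioo 1 2) := by
  rintro x ⟨hx1, hx2⟩
  have hx0 : x ≠ 0 := by positivity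
  simp only [betaFn, betaPiece₁, kerL0Fn, phi0_of_one_le hx1.le,
    phi0_of_le_one (by linarith : x / 2 ≤ 1), phi0_of_le_one (by linarith : x / 3 ≤ 1),
    log_div hx0 two_ne_zero, log_div hx0 three_ne_zero]
  push_cast
  ring

lemma betaFn_eqOn_Ioo_two_three : EqOn betaFn betaPiece₂ (Ioo 2 3) := by
  rintro x ⟨hx2, hx3⟩
  have hx0 : x ≠ 0 := by positivity
  simp only [betaFn, betaPiece₂, kerL0Fn, phi0_of_one_le (by linarith : 1 ≤ x),
    phi0_of_one_le (by linarith : 1 ≤ x / 2), phi0_of_le_one (by linarith : x / 3 ≤ 1),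
    log_div hx0 two_ne_zero, log_div hx0 three_ne_zero]
  push_cast
  ring

lemma betaFn_eq_zero_of_three_le {x : ℝ} (hx : 3 ≤ x) : betaFn x = 0 := by
  have hx0 : x ≠ 0 := by positivity
  rw [betaFn, Complex.ofReal_eq_zero, phi0_of_one_le (by linarith : 1 ≤ x),
    phi0_of_one_le (by linarith : 1 ≤ x / 2), phi0_of_one_le (by linarith : 1 ≤ x / 3),
    log_div hx0 two_ne_zero, log_div hx0 three_ne_zero]
  ring

lemma nonSingularBLS_betaFn : NonSingularBLS 1 betaFn :=
  ⟨_, _, fun x hx => (betaFn_eqOn_Ioo_zero_one hx).trans (kerL0Fn_zero_zero _ _ x)⟩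

lemma isBLSpline_betaFn : IsBLSpline 3 (fun j => (j : ℝ)) betaFn where
  pieces j hj1 hj3 := by
    obtain rfl | rfl : j = 1 ∨ j = 2 := by omega
    · exact ⟨_, _, _, _, fun x hx => betaFn_eqOn_Ioo_one_two (by norm_num at hx ⊢; exact hx)⟩
    · exact ⟨_, _, _, _, fun x hx => betaFn_eqOn_Ioo_two_three (by norm_num at hx ⊢; exact hx)⟩
  left :=
    let ⟨a, c, h⟩ := nonSingularBLS_betaFn
    ⟨a, 0, c, fun x hx => by simp [h x (by simpa using hx)]⟩
  right := ⟨0, 0, fun x hx => by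
    simp [betaFn_eq_zero_of_three_le (le_of_lt (by simpa using hx))]⟩
  smooth := contDiffOn_betaFn
  cont0 := continuous_betaFn.continuousWithinAt

lemma eq_smul_betaPieces_of_kerL0Jet_eq {a₀ c₀ a₁ b₁ c₁ d₁ a₂ b₂ c₂ d₂ : ℂ}
    (h₁ : kerL0Jet a₀ 0 c₀ 0 1 = kerL0Jet a₁ b₁ c₁ d₁ 1)
    (h₂ : kerL0Jet a₁ b₁ c₁ d₁ 2 = kerL0Jet a₂ b₂ c₂ d₂ 2)
    (h₃ : kerL0Jet a₂ b₂ c₂ d₂ 3 = kerL0Jet 0 0 0 0 3) :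
    kerL0Fn a₀ 0 c₀ 0 = b₁ • betaPiece₀ ∧ kerL0Fn a₁ b₁ c₁ d₁ = b₁ • betaPiece₁ ∧
      kerL0Fn a₂ b₂ c₂ d₂ = b₁ • betaPiece₂ := by
  simp only [kerL0Jet, kerL0Fn, kerL0Fn', kerL0Fn'', Prod.mk.injEq, log_one, Complex.ofReal_one,
    Complex.ofReal_zero, Complex.ofReal_ofNat] at h₁ h₂ h₃
  obtain ⟨E1, E2, E3⟩ := h₁
  obtain ⟨E4, E5, E6⟩ := h₂
  obtain ⟨E7, E8, E9⟩ := h₃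
  have hd1 : d₁ = b₁ := by linear_combination (E3 - E2) / 2
  have hb2 : b₂ = -3 / 5 * b₁ := by
    linear_combination (-(1:ℂ) / 5) * (E5 - 2 * E6 - hd1 + (3 / 2) * (E8 - 3 * E9))
  have hd2 : d₂ = -27 / 5 * b₁ := by
    linear_combination (3 / 2) * (E8 - 3 * E9) + 9 * hb2
  have ha2 : a₂ = (3 * log 3 + 3) / 5 * b₁ := by
    linear_combination (1 / 2) * E9 - ((log 3 : ℂ) + 3 / 2) * hb2 + (1 / 18) * hd2
  have hc2 : c₂ = (27 * log 3 - 27) / 5 * b₁ := by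
    linear_combination E7 - 9 * ha2 - 9 * (log 3 : ℂ) * hb2 - (log 3 : ℂ) * hd2
  have ha1 : a₁ = (3 * log 3 - 8 * log 2 - 5) / 5 * b₁ := by
    linear_combination
      (1 / 2) * E6 + ha2 + ((log 2 : ℂ) + 3 / 2) * hb2 + (1 / 8) * hd1 - (1 / 8) * hd2
  have hc1 : c₁ = (27 * log 3 - 32 * log 2 + 5) / 5 * b₁ := by
    linear_combination E4 - 4 * ha1 + 4 * ha2 + 4 * (log 2 : ℂ) * hb2 + hc2
      + (log 2 : ℂ) * hd2 - (log 2 : ℂ) * hd1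
  have ha0 : a₀ = (3 * log 3 - 8 * log 2) / 5 * b₁ := by
    linear_combination (1 / 2) * E2 + ha1 + (1 / 2) * hd1
  have hc0 : c₀ = (27 * log 3 - 32 * log 2) / 5 * b₁ := by
    linear_combination E1 - ha0 + ha1 + hc1
  refine ⟨funext fun x => ?_, funext fun x => ?_, funext fun x => ?_⟩ <;>
    simp only [betaPiece₀, betaPiece₁, betaPiece₂, kerL0Fn, Pi.smul_apply, smul_eq_mul]
  · rw [ha0, hc0]; ring
  · rw [ha1, hc1, hd1]; ring
  · rw [ha2, hb2, hc2, hd2]; ring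

lemma IsBLSpline.continuousOn_Ici {n : ℕ} {r : ℕ → ℝ} {η : ℝ → ℂ} (h : IsBLSpline n r η) :
    ContinuousOn η (Ici 0) := by
  intro x hx
  rcases (mem_Ici.1 hx).eq_or_lt with rfl | hx0
  · exact h.cont0
  · exact (h.smooth.continuousOn.continuousAt (Ioi_mem_nhds hx0)).continuousWithinAt

theorem IsBLSpline.exists_eq_mul_betaFn {γ : ℝ → ℂ} (hγ : IsBLSpline 3 (fun j => (j : ℝ)) γ)
    (hns : NonSingularBLS 1 γ) (h3 : ∀ x : ℝ, 3 ≤ x → γ x = 0) :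
    ∃ c : ℂ, ∀ x : ℝ, 0 ≤ x → γ x = c * betaFn x := by
  obtain ⟨a₀, c₀, h₀⟩ := hns
  obtain ⟨a₁, b₁, c₁, d₁, h₁⟩ := hγ.pieces 1 le_rfl (by norm_num)
  obtain ⟨a₂, b₂, c₂, d₂, h₂⟩ := hγ.pieces 2 (by norm_num) le_rfl
  have e₀ : EqOn γ (kerL0Fn a₀ 0 c₀ 0) (Ioo 0 1) := fun x hx =>
    (h₀ x hx).trans (kerL0Fn_zero_zero a₀ c₀ x).symm
  have e₁ : EqOn γ (kerL0Fn a₁ b₁ c₁ d₁) (Ioo 1 2) := fun x hx =>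
    h₁ x (by norm_num [hx.1, hx.2])
  have e₂ : EqOn γ (kerL0Fn a₂ b₂ c₂ d₂) (Ioo 2 3) := fun x hx =>
    h₂ x (by norm_num [hx.1, hx.2])
  have e₃ : EqOn γ (kerL0Fn 0 0 0 0) (Ioo 3 4) := fun x hx => by simp [h3 x hx.1.le, kerL0Fn]
  have jet := @kerL0Jet_eq_of_eqOn_Ioo γ hγ.smooth
  obtain ⟨p₀, p₁, p₂⟩ := eq_smul_betaPieces_of_kerL0Jet_eq
    (jet le_rfl one_pos one_lt_two e₀ e₁) (jet zero_le_one one_lt_two (by norm_num) e₁ e₂)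
    (jet zero_le_two (by norm_num) (by norm_num) e₂ e₃)
  have piece {f g : ℝ → ℂ} {s : Set ℝ} (hγf : EqOn γ f s) (hf : f = b₁ • g)
      (hg : EqOn betaFn g s) : EqOn γ (b₁ • betaFn) s := fun x hx => by
    rw [hγf hx, hf, Pi.smul_apply, Pi.smul_apply, hg hx]
  have hγβ : EqOn γ (b₁ • betaFn) (Ici 0) :=
    eqOn_Ici_zero_of_eqOn_off_knots hγ.continuousOn_Ici
      (continuous_betaFn.continuousOn.const_smul b₁)
      ((((piece e₀ p₀ betaFn_eqOn_Ioo_zero_one).union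
        (piece e₁ p₁ betaFn_eqOn_Ioo_one_two)).union
        (piece e₂ p₂ betaFn_eqOn_Ioo_two_three)).union fun x hx => by
          simp [h3 x (le_of_lt hx), betaFn_eq_zero_of_three_le (le_of_lt hx)])
  exact ⟨b₁, fun x hx => hγβ hx⟩

/-- the profile `β` is a non-singular Beppo Levi `L₀`-spline on the knots
`{1,2,3}` vanishing on `[3,∞)`, and any non-singular Beppo Levi `L₀`-spline on `{1,2,3}`
vanishing on `[3,∞)` is a constant multiple of `β`. -/
theorem stmt18 :
    (IsBLSpline 3 (fun j => (j : ℝ)) betaFn ∧ NonSingularBLS 1 betaFn ∧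
      ∀ x : ℝ, 3 ≤ x → betaFn x = 0) ∧
    (∀ γ : ℝ → ℂ, IsBLSpline 3 (fun j => (j : ℝ)) γ → NonSingularBLS 1 γ →
      (∀ x : ℝ, 3 ≤ x → γ x = 0) →
      ∃ c : ℂ, ∀ x : ℝ, 0 ≤ x → γ x = c * betaFn x) :=
  ⟨⟨isBLSpline_betaFn, nonSingularBLS_betaFn, fun _ => betaFn_eq_zero_of_three_le⟩,
    fun _ hγ hns h3 => hγ.exists_eq_mul_betaFn hns h3⟩
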